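/- arXiv:2510.26948 — 2 statements merged into one kernel-verified Lean document; each statement's English description precedes it below -/
import Mathlib

section
/- Let V : [t₀, T) → ℝ be differentiable and nonnegative, let a : [t₀, T) → ℝ be differentiable and positive with a'(t)/a(t) > 0, and let b > 0. If V'(t) ≤ −b·V(t) − 2·(a'(t)/a(t))·V(t) for all t ∈ [t₀, T), then for all t ∈ [t₀, T), V(t) ≤ a(t)^(−2) · exp(−b·(t − t₀)) · a(t₀)² · V(t₀). -/
/-!
Multiplying by the integrating factor `a(t)² e^{b (t - t₀)}` turns the differential inequality
into `(V a² e^{b (t - t₀)})' ≤ 0`, so this product is antitone on `[t₀, T)` and is bounded by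
its value `a(t₀)² V(t₀)` at `t₀`.
-/

open Set Real

section IntegratingFactor

variable {t₀ b : ℝ} {V V' a a' : ℝ → ℝ}

theorem hasDerivAt_mul_sq_mul_exp {x : ℝ} (hV : HasDerivAt V (V' x) x)
    (ha : HasDerivAt a (a' x) x) (hax : a x ≠ 0) :
    HasDerivAt (fun s => V s * a s ^ 2 * exp (b * (s - t₀)))
      ((V' x + b * V x + 2 * (a' x / a x) * V x) * (a x ^ 2 * exp (b * (x - t₀)))) x := by
  have hexp : HasDerivAt (fun s => exp (b * (s - t₀))) (exp (b * (x - t₀)) * b) x := by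
    simpa using (((hasDerivAt_id x).sub_const t₀).const_mul b).exp
  refine ((hV.fun_mul (ha.fun_pow 2)).fun_mul hexp).congr_deriv ?_
  field_simp
  ring

theorem antitoneOn_mul_sq_mul_exp {s : Set ℝ} (hs : Convex ℝ s)
    (hV : ∀ t ∈ s, HasDerivAt V (V' t) t) (ha : ∀ t ∈ s, HasDerivAt a (a' t) t)
    (ha₀ : ∀ t ∈ s, a t ≠ 0)
    (hineq : ∀ t ∈ s, V' t ≤ -b * V t - 2 * (a' t / a t) * V t) :
    AntitoneOn (fun t => V t * a t ^ 2 * exp (b * (t - t₀))) s := by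
  have hderiv (t : ℝ) (ht : t ∈ s) := hasDerivAt_mul_sq_mul_exp (t₀ := t₀) (b := b)
    (hV t ht) (ha t ht) (ha₀ t ht)
  refine antitoneOn_of_hasDerivWithinAt_nonpos hs
    (fun t ht => (hderiv t ht).continuousAt.continuousWithinAt)
    (fun t ht => (hderiv t (interior_subset ht)).hasDerivWithinAt)
    (fun t ht => mul_nonpos_of_nonpos_of_nonneg ?_ (by positivity))
  linarith [hineq t (interior_subset ht)]

end IntegratingFactor

theorem prescribed_time_comparison_general
    (t₀ T b : ℝ)
    (V V' a a' : ℝ → ℝ)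
    (hV : ∀ t ∈ Set.Ico t₀ T, HasDerivAt V (V' t) t)
    (ha : ∀ t ∈ Set.Ico t₀ T, HasDerivAt a (a' t) t)
    (hapos : ∀ t ∈ Set.Ico t₀ T, 0 < a t)
    (hineq : ∀ t ∈ Set.Ico t₀ T, V' t ≤ -b * V t - 2 * (a' t / a t) * V t) :
    ∀ t ∈ Set.Ico t₀ T,
      V t ≤ (a t) ^ (-2 : ℤ) * Real.exp (-b * (t - t₀)) * (a t₀) ^ 2 * V t₀ := by
  intro t ht
  have hdecay : V t * a t ^ 2 * exp (b * (t - t₀)) ≤ V t₀ * a t₀ ^ 2 := by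
    simpa using antitoneOn_mul_sq_mul_exp (t₀ := t₀) (convex_Ico t₀ T) hV ha
      (fun s hs => (hapos s hs).ne') hineq (left_mem_Ico.mpr (ht.1.trans_lt ht.2)) ht ht.1
  have hweight : 0 < a t ^ 2 * exp (b * (t - t₀)) := by
    have := hapos t ht
    positivity
  calc V t = V t * a t ^ 2 * exp (b * (t - t₀)) / (a t ^ 2 * exp (b * (t - t₀))) := by
        rw [mul_assoc, mul_div_cancel_right₀ _ hweight.ne']
    _ ≤ V t₀ * a t₀ ^ 2 / (a t ^ 2 * exp (b * (t - t₀))) := by gcongr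
    _ = a t ^ (-2 : ℤ) * exp (-b * (t - t₀)) * a t₀ ^ 2 * V t₀ := by
        rw [zpow_neg, zpow_two, ← sq, neg_mul, exp_neg]
        field_simp

theorem prescribed_time_comparison
    (t₀ T b : ℝ) (hb : 0 < b) (ht : t₀ < T)
    (V V' a a' : ℝ → ℝ)
    (hV : ∀ t ∈ Set.Ico t₀ T, HasDerivAt V (V' t) t)
    (hVnn : ∀ t ∈ Set.Ico t₀ T, 0 ≤ V t)
    (ha : ∀ t ∈ Set.Ico t₀ T, HasDerivAt a (a' t) t)
    (hapos : ∀ t ∈ Set.Ico t₀ T, 0 < a t)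
    (haratio : ∀ t ∈ Set.Ico t₀ T, 0 < a' t / a t)
    (hineq : ∀ t ∈ Set.Ico t₀ T, V' t ≤ -b * V t - 2 * (a' t / a t) * V t) :
    ∀ t ∈ Set.Ico t₀ T,
      V t ≤ (a t) ^ (-2 : ℤ) * Real.exp (-b * (t - t₀)) * (a t₀) ^ 2 * V t₀ :=
  prescribed_time_comparison_general t₀ T b V V' a a' hV ha hapos hineq
end

section
/- Let V : [t₀, T) → ℝ be differentiable and nonnegative and suppose V'(t) ≤ −b·V(t) − 2·(a'(t)/a(t))·V(t) on [t₀, T) where b > 0 and a : [t₀, T) → (0,∞) is differentiable with a(t) → ∞ as t → T⁻. Then V(t) → 0 as t → T⁻. -/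
/-! The weighted function `a² V` has derivative `a² (V' + 2 (a'/a) V) ≤ -b a² V ≤ 0`, so it is
nonincreasing. Hence `0 ≤ V ≤ a(t₀)² V(t₀) / a²`, and the right-hand side tends to `0` as `a` blows
up at `T`. -/

open Filter Set Topology

lemma antitoneOn_of_hasDerivAt_nonpos {D : Set ℝ} (hD : Convex ℝ D) {f f' : ℝ → ℝ}
    (hf : ∀ x ∈ D, HasDerivAt f (f' x) x) (hf'₀ : ∀ x ∈ D, f' x ≤ 0) : AntitoneOn f D :=
  antitoneOn_of_hasDerivWithinAt_nonpos hD
    (fun x hx ↦ (hf x hx).continuousAt.continuousWithinAt)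
    (fun x hx ↦ (hf x (interior_subset hx)).hasDerivWithinAt)
    (fun x hx ↦ hf'₀ x (interior_subset hx))

lemma sq_mul_deriv_nonpos_of_le {a a' v v' b : ℝ} (hb : 0 ≤ b) (ha : a ≠ 0) (hv : 0 ≤ v)
    (h : v' ≤ -b * v - 2 * (a' / a) * v) : 2 * a * a' * v + a ^ 2 * v' ≤ 0 := by
  have hbound : a ^ 2 * v' ≤ a ^ 2 * (-b * v - 2 * (a' / a) * v) :=
    mul_le_mul_of_nonneg_left h (sq_nonneg a)
  have hexpand : a ^ 2 * (-b * v - 2 * (a' / a) * v) = -(b * (a ^ 2 * v)) - 2 * a * a' * v := by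
    field_simp
  have hdecay : 0 ≤ b * (a ^ 2 * v) := by positivity
  linarith

lemma antitoneOn_sq_mul_of_deriv_le {D : Set ℝ} (hD : Convex ℝ D) {b : ℝ} (hb : 0 ≤ b)
    {v v' a a' : ℝ → ℝ} (hv : ∀ t ∈ D, HasDerivAt v (v' t) t) (hvnn : ∀ t ∈ D, 0 ≤ v t)
    (ha : ∀ t ∈ D, HasDerivAt a (a' t) t) (hapos : ∀ t ∈ D, a t ≠ 0)
    (hineq : ∀ t ∈ D, v' t ≤ -b * v t - 2 * (a' t / a t) * v t) :
    AntitoneOn (fun t ↦ a t ^ 2 * v t) D := by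
  refine antitoneOn_of_hasDerivAt_nonpos hD (fun t ht ↦ ?_)
    (fun t ht ↦ sq_mul_deriv_nonpos_of_le hb (hapos t ht) (hvnn t ht) (hineq t ht))
  refine (((ha t ht).fun_pow 2).fun_mul (hv t ht)).congr_deriv ?_
  push_cast
  ring

lemma tendsto_zero_of_le_div_sq {α : Type*} {l : Filter α} {v a : α → ℝ} {C : ℝ}
    (ha : Tendsto a l atTop) (hv0 : ∀ᶠ x in l, 0 ≤ v x) (hvle : ∀ᶠ x in l, v x ≤ C / a x ^ 2) :
    Tendsto v l (𝓝 0) :=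
  tendsto_of_tendsto_of_tendsto_of_le_of_le' tendsto_const_nhds
    (tendsto_const_nhds.div_atTop ((tendsto_pow_atTop two_ne_zero).comp ha)) hv0 hvle

theorem prescribed_time_convergence
    (t₀ T b : ℝ) (hb : 0 < b) (ht : t₀ < T)
    (V V' a a' : ℝ → ℝ)
    (hV : ∀ t ∈ Set.Ico t₀ T, HasDerivAt V (V' t) t)
    (hVnn : ∀ t ∈ Set.Ico t₀ T, 0 ≤ V t)
    (ha : ∀ t ∈ Set.Ico t₀ T, HasDerivAt a (a' t) t)
    (hapos : ∀ t ∈ Set.Ico t₀ T, 0 < a t)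
    (hblow : Filter.Tendsto a (nhdsWithin T (Set.Iio T)) Filter.atTop)
    (hineq : ∀ t ∈ Set.Ico t₀ T, V' t ≤ -b * V t - 2 * (a' t / a t) * V t) :
    Filter.Tendsto V (nhdsWithin T (Set.Iio T)) (nhds 0) := by
  have hanti := antitoneOn_sq_mul_of_deriv_le (convex_Ico t₀ T) hb.le hV hVnn ha
    (fun t ht ↦ (hapos t ht).ne') hineq
  have hbound : ∀ t ∈ Ico t₀ T, V t ≤ a t₀ ^ 2 * V t₀ / a t ^ 2 := fun t htmem ↦ by
    rw [le_div_iff₀ (pow_pos (hapos t htmem) 2), mul_comm]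
    exact hanti (left_mem_Ico.2 ht) htmem htmem.1
  have hIco : Ico t₀ T ∈ 𝓝[<] T := Ico_mem_nhdsLT ht
  exact tendsto_zero_of_le_div_sq hblow (mem_of_superset hIco hVnn) (mem_of_superset hIco hbound)
end
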